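/- arXiv:2110.14288 — 4 statements merged into one kernel-verified Lean document; each statement's English description precedes it below -/
import Mathlib

section
/- If two symmetric operators Q¹, Q² on ℝⁿ satisfy (Q¹)² + (Q²)² = c·Id for some real constant c, then there exists an orthonormal basis of ℝⁿ in which the matrices of Q¹ and Q² are simultaneously block-diagonal, with all blocks of size 1×1 or 2×2, where each pair of corresponding 2×2 blocks has the form Q¹ₛ = [[αₛ, 0],[0, -αₛ]] and Q²ₛ = [[βₛ, γₛ],[γₛ, -βₛ]] with αₛ² + βₛ² + γₛ² = c and αₛγₛ ≠ 0. -/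
/-!
Let `C = AB + BA`. Since `A² = c - B²` commutes with `B`, `C` commutes with `A`, so `A` and `C`
have a common unit eigenvector `v`, say `Av = av` and `Cv = c'v`. Write `Bv = xv + u` with
`u ⊥ v`. Symmetry of `A` and `B` then gives `Au = -au`, `Bu = ‖u‖²v - xu` and
`a² + x² + ‖u‖² = c`, so `span {v, u}` is invariant under `A` and `B`. If `u = 0` or `a = 0` it
contains a common eigenvector of `A` and `B`; otherwise `v, u / ‖u‖` is a `2 × 2` block of the
required shape. The orthogonal complement of an invariant subspace is again invariant, so
induction on the dimension collects the blocks at the front and the common eigenvectors at the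
end of an orthonormal basis.
-/

open Matrix

open Module Submodule Module.End
open scoped RealInnerProductSpace

theorem commute_mul_add_mul_of_mul_self_add_mul_self_eq {R S : Type*} [CommSemiring R] [Ring S]
    [Algebra R S] {A B : S} {c : R} (h : A * A + B * B = c • 1) :
    Commute A (A * B + B * A) := by
  have hB : B * (A * A) = A * A * B := by
    rw [eq_sub_of_add_eq h, mul_sub, sub_mul, mul_smul_comm, smul_mul_assoc, mul_one, one_mul,
      mul_assoc]
  show A * (A * B + B * A) = (A * B + B * A) * A
  rw [mul_add, add_mul, ← mul_assoc, ← hB, mul_assoc, mul_assoc, add_comm]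

theorem LinearMap.IsSymmetric.mul_add_mul {𝕜 E : Type*} [RCLike 𝕜] [NormedAddCommGroup E]
    [InnerProductSpace 𝕜 E] {A B : Module.End 𝕜 E} (hA : A.IsSymmetric) (hB : B.IsSymmetric) :
    (A * B + B * A).IsSymmetric := by
  intro x y
  simp only [LinearMap.add_apply, Module.End.mul_apply, inner_add_left, inner_add_right]
  rw [hA, hB, hB, hA, add_comm]

theorem Module.End.span_mem_invtSubmodule_iff {R M : Type*} [Semiring R] [AddCommMonoid M]
    [Module R M] {f : Module.End R M} {s : Set M} :
    span R s ∈ f.invtSubmodule ↔ ∀ x ∈ s, f x ∈ span R s :=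
  span_le

theorem Module.End.span_singleton_mem_invtSubmodule {R M : Type*} [Semiring R] [AddCommMonoid M]
    [Module R M] {f : Module.End R M} {x : M} {μ : R} (h : f x = μ • x) :
    (R ∙ x) ∈ f.invtSubmodule :=
  span_mem_invtSubmodule_iff.mpr fun y hy => by
    rw [Set.mem_singleton_iff.mp hy, h]
    exact smul_mem _ _ (mem_span_singleton_self x)

variable {F : Type*} [NormedAddCommGroup F] [InnerProductSpace ℝ F]

theorem LinearMap.IsSymmetric.exists_unit_eigenvector_mem [FiniteDimensional ℝ F]
    {T : Module.End ℝ F} (hT : T.IsSymmetric) {V : Submodule ℝ F} (hV : V ∈ T.invtSubmodule)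
    (hV0 : V ≠ ⊥) : ∃ z ∈ V, ‖z‖ = 1 ∧ ∃ μ : ℝ, T z = μ • z := by
  have : Nontrivial V := nontrivial_iff_ne_bot.mpr hV0
  obtain ⟨x, hx⟩ :=
    (hT.restrict_invariant hV).hasEigenvalue_iSup_of_finiteDimensional.exists_hasEigenvector
  have hx0 : (x : F) ≠ 0 := by simpa using hx.2
  have hTx : T x = _ • (x : F) := congr_arg Subtype.val hx.apply_eq_smul
  exact ⟨‖(x : F)‖⁻¹ • (x : F), V.smul_mem _ x.2, norm_smul_inv_norm hx0, _,
    by rw [map_smul, hTx, smul_comm]⟩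

theorem LinearMap.IsSymmetric.exists_unit_common_eigenvector_mem [FiniteDimensional ℝ F]
    {A C : Module.End ℝ F} (hA : A.IsSymmetric) (hC : C.IsSymmetric) (hAC : Commute A C)
    {V : Submodule ℝ F} (hVA : V ∈ A.invtSubmodule) (hVC : V ∈ C.invtSubmodule) (hV0 : V ≠ ⊥) :
    ∃ z ∈ V, ‖z‖ = 1 ∧ (∃ a : ℝ, A z = a • z) ∧ ∃ c : ℝ, C z = c • z := by
  obtain ⟨x, hxV, hx, a, hxa⟩ := hA.exists_unit_eigenvector_mem hVA hV0
  have hWC : V ⊓ A.eigenspace a ∈ C.invtSubmodule :=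
    invtSubmodule.inf_mem hVC (mapsTo_genEigenspace_of_comm hAC a 1)
  have hW0 : V ⊓ A.eigenspace a ≠ ⊥ := by
    refine (Submodule.ne_bot_iff _).mpr ⟨x, ⟨hxV, mem_eigenspace_iff.mpr hxa⟩, ?_⟩
    rintro rfl
    simp at hx
  obtain ⟨z, ⟨hzV, hzA⟩, hz, hzC⟩ := hC.exists_unit_eigenvector_mem hWC hW0
  exact ⟨z, hzV, hz, ⟨a, mem_eigenspace_iff.mp hzA⟩, hzC⟩

def IsPairBlock (A B : Module.End ℝ F) (c : ℝ) (v w : F) : Prop :=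
  ∃ α β γ : ℝ, α ^ 2 + β ^ 2 + γ ^ 2 = c ∧ α * γ ≠ 0 ∧
    A v = α • v ∧ A w = -α • w ∧ B v = β • v + γ • w ∧ B w = γ • v - β • w

section CommonEigenvectorOfAnticommutator

variable {A B : Module.End ℝ F} {v u : F} {a x : ℝ}

theorem LinearMap.IsSymmetric.apply_eq_neg_smul_of_anticommutator (hA : A.IsSymmetric) {c' : ℝ}
    (hv : ‖v‖ = 1) (hAv : A v = a • v) (hCv : (A * B + B * A) v = c' • v)
    (hBv : B v = x • v + u) (hvu : ⟪v, u⟫ = 0) : A u = -a • u := by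
  have hABv : A (B v) = c' • v - a • B v := by
    rw [← hCv, LinearMap.add_apply, Module.End.mul_apply, Module.End.mul_apply, hAv, map_smul,
      add_sub_cancel_right]
  have hAu : A u = (c' - 2 * a * x) • v - a • u := by
    rw [eq_sub_of_add_eq' hBv.symm, map_sub, map_smul, hABv, hAv, hBv]
    module
  have hc' : c' - 2 * a * x = 0 := by
    have h0 : ⟪v, A u⟫ = 0 := by rw [← hA, hAv, real_inner_smul_left, hvu, mul_zero]
    rwa [hAu, inner_sub_right, real_inner_smul_right, real_inner_smul_right,
      real_inner_self_eq_norm_sq, hv, hvu, mul_zero, sub_zero, one_pow, mul_one] at h0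
  rw [hAu, hc', zero_smul, zero_sub, neg_smul]

theorem LinearMap.IsSymmetric.apply_eq_and_sq_add_sq_add_sq_eq (hB : B.IsSymmetric) {c : ℝ}
    (h : A * A + B * B = c • 1) (hv : ‖v‖ = 1) (hAv : A v = a • v)
    (hBv : B v = x • v + u) (hvu : ⟪v, u⟫ = 0) :
    B u = ‖u‖ ^ 2 • v - x • u ∧ a ^ 2 + x ^ 2 + ‖u‖ ^ 2 = c := by
  have hBBv : B (B v) = (c - a ^ 2) • v := by
    have hcv := congr($h v)
    rw [LinearMap.add_apply, Module.End.mul_apply, Module.End.mul_apply, hAv, map_smul, hAv,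
      LinearMap.smul_apply, Module.End.one_apply] at hcv
    rw [eq_sub_of_add_eq' hcv]
    module
  have hBu : B u = (c - a ^ 2 - x ^ 2) • v - x • u := by
    rw [eq_sub_of_add_eq' hBv.symm, map_sub, map_smul, hBBv, hBv]
    module
  have hvv : ⟪v, v⟫ = 1 := by rw [real_inner_self_eq_norm_sq, hv, one_pow]
  have hu : ‖u‖ ^ 2 = c - a ^ 2 - x ^ 2 := by
    calc ‖u‖ ^ 2 = ⟪B v, u⟫ := by
          rw [hBv, inner_add_left, real_inner_smul_left, hvu, real_inner_self_eq_norm_sq]; ring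
      _ = ⟪v, B u⟫ := hB v u
      _ = c - a ^ 2 - x ^ 2 := by
          rw [hBu, inner_sub_right, real_inner_smul_right, real_inner_smul_right, hvv, hvu]; ring
  exact ⟨by rw [hu, hBu], by linarith⟩

theorem isPairBlock_inv_norm_smul {c : ℝ} (hu : u ≠ 0) (ha : a ≠ 0) (hAv : A v = a • v)
    (hAu : A u = -a • u) (hBv : B v = x • v + u) (hBu : B u = ‖u‖ ^ 2 • v - x • u)
    (hc : a ^ 2 + x ^ 2 + ‖u‖ ^ 2 = c) : IsPairBlock A B c v (‖u‖⁻¹ • u) := by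
  have hu' : ‖u‖ ≠ 0 := norm_ne_zero_iff.mpr hu
  refine ⟨a, x, ‖u‖, hc, mul_ne_zero ha hu', hAv, ?_, ?_, ?_⟩
  · rw [map_smul, hAu, smul_comm]
  · rw [hBv, smul_smul, mul_inv_cancel₀ hu', one_smul]
  · rw [map_smul, hBu]
    match_scalars <;> field_simp

end CommonEigenvectorOfAnticommutator

theorem exists_common_eigenvector_or_isPairBlock [FiniteDimensional ℝ F]
    {A B : Module.End ℝ F} {c : ℝ} (hA : A.IsSymmetric) (hB : B.IsSymmetric)
    (h : A * A + B * B = c • 1) {V : Submodule ℝ F} (hVA : V ∈ A.invtSubmodule)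
    (hVB : V ∈ B.invtSubmodule) (hV0 : V ≠ ⊥) :
    (∃ z ∈ V, ‖z‖ = 1 ∧ (∃ μ : ℝ, A z = μ • z) ∧ ∃ ν : ℝ, B z = ν • z) ∨
      ∃ p ∈ V, ∃ q ∈ V, ‖p‖ = 1 ∧ ‖q‖ = 1 ∧ ⟪p, q⟫ = 0 ∧ IsPairBlock A B c p q := by
  obtain ⟨v, hvV, hv, ⟨a, hAv⟩, c', hCv⟩ :=
    hA.exists_unit_common_eigenvector_mem (hA.mul_add_mul hB)
      (commute_mul_add_mul_of_mul_self_add_mul_self_eq h) hVA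
      (fun y hy => V.add_mem (hVA (hVB hy)) (hVB (hVA hy))) hV0
  set x := ⟪v, B v⟫
  set u := B v - x • v with hu
  have hBv : B v = x • v + u := by rw [hu]; abel
  have hvu : ⟪v, u⟫ = 0 := by
    rw [hu, inner_sub_right, real_inner_smul_right, real_inner_self_eq_norm_sq, hv]; ring
  have huV : u ∈ V := V.sub_mem (hVB hvV) (V.smul_mem _ hvV)
  have hAu := hA.apply_eq_neg_smul_of_anticommutator hv hAv hCv hBv hvu
  obtain ⟨hBu, hc⟩ := hB.apply_eq_and_sq_add_sq_add_sq_eq h hv hAv hBv hvu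
  by_cases hu0 : u = 0
  · exact .inl ⟨v, hvV, hv, ⟨a, hAv⟩, x, by rw [hBv, hu0, add_zero]⟩
  by_cases ha : a = 0
  · -- `A` vanishes on the `B`-invariant plane `span {v, u}`, so any `B`-eigenvector there will do
    have hUB : span ℝ {v, u} ∈ B.invtSubmodule := by
      refine span_mem_invtSubmodule_iff.mpr ?_
      rintro _ (rfl | rfl) <;> refine mem_span_pair.mpr ?_
      exacts [⟨x, 1, by rw [one_smul, hBv]⟩, ⟨‖u‖ ^ 2, -x, by rw [hBu, neg_smul, sub_eq_add_neg]⟩]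
    have hU0 : span ℝ {v, u} ≠ ⊥ :=
      (Submodule.ne_bot_iff _).mpr ⟨v, subset_span (by simp), by rintro rfl; simp at hv⟩
    obtain ⟨z, hzU, hz, hBz⟩ := hB.exists_unit_eigenvector_mem hUB hU0
    obtain ⟨s, t, rfl⟩ := mem_span_pair.mp hzU
    refine .inl ⟨_, V.add_mem (V.smul_mem _ hvV) (V.smul_mem _ huV), hz, ⟨0, ?_⟩, hBz⟩
    rw [map_add, map_smul, map_smul, hAv, hAu, ha]
    simp
  · exact .inr ⟨v, hvV, _, V.smul_mem _ huV, hv, norm_smul_inv_norm hu0,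
      by rw [real_inner_smul_right, hvu, mul_zero],
      isPairBlock_inv_norm_smul hu0 ha hAv hAu hBv hBu hc⟩

theorem IsPairBlock.span_mem_invtSubmodule {A B : Module.End ℝ F} {c : ℝ} {p q : F}
    (h : IsPairBlock A B c p q) :
    span ℝ {p, q} ∈ A.invtSubmodule ∧ span ℝ {p, q} ∈ B.invtSubmodule := by
  obtain ⟨α, β, γ, -, -, hAp, hAq, hBp, hBq⟩ := h
  constructor <;> refine span_mem_invtSubmodule_iff.mpr ?_ <;> rintro _ (rfl | rfl) <;>
    refine mem_span_pair.mpr ?_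
  exacts [⟨α, 0, by simp [hAp]⟩, ⟨0, -α, by simp [hAq]⟩, ⟨β, γ, hBp.symm⟩,
    ⟨γ, -β, by rw [hBq, neg_smul, sub_eq_add_neg]⟩]

theorem IsPairBlock.inner_eq {A B : Module.End ℝ F} {c : ℝ} {p q : F}
    (h : IsPairBlock A B c p q) (hp : ‖p‖ = 1) (hq : ‖q‖ = 1) (hpq : ⟪p, q⟫ = 0) :
    ⟪p, A p⟫ ^ 2 + ⟪p, B p⟫ ^ 2 + ⟪p, B q⟫ ^ 2 = c ∧ ⟪p, A p⟫ * ⟪p, B q⟫ ≠ 0 ∧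
      ⟪q, A q⟫ = -⟪p, A p⟫ ∧ ⟪q, B q⟫ = -⟪p, B p⟫ := by
  obtain ⟨α, β, γ, hc, hαγ, hAp, hAq, hBp, hBq⟩ := h
  have hpp : ⟪p, p⟫ = 1 := by rw [real_inner_self_eq_norm_sq, hp, one_pow]
  have hqq : ⟪q, q⟫ = 1 := by rw [real_inner_self_eq_norm_sq, hq, one_pow]
  have hqp : ⟪q, p⟫ = 0 := by rw [real_inner_comm, hpq]
  simp only [hAp, hAq, hBp, hBq, inner_add_right, inner_sub_right, real_inner_smul_right, hpp,
    hqq, hpq, hqp]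
  refine ⟨?_, ?_, ?_, ?_⟩ <;> [linear_combination hc; simpa using hαγ; ring; ring]

theorem finrank_span_pair_of_orthonormal {p q : F} (hp : ‖p‖ = 1) (hq : ‖q‖ = 1)
    (hpq : ⟪p, q⟫ = 0) : finrank ℝ (span ℝ {p, q}) = 2 := by
  have hpq' : Orthonormal ℝ ![p, q] := by simp [hp, hq, hpq]
  have := finrank_span_eq_card hpq'.linearIndependent
  rwa [Matrix.range_cons_cons_empty, Fintype.card_fin] at this

def pairCons (p q : F) (v : ℕ → F) : ℕ → F
  | 0 => p
  | 1 => q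
  | i + 2 => v i

/-- Only `v 0, …, v (m - 1)` matter: the rest of the sequence is unconstrained. -/
structure IsBlockBasis (A B : Module.End ℝ F) (c : ℝ) (m k : ℕ) (v : ℕ → F) : Prop where
  two_mul_le : 2 * k ≤ m
  orthonormal : Orthonormal ℝ fun i : Fin m => v i
  isPairBlock : ∀ s < k, IsPairBlock A B c (v (2 * s)) (v (2 * s + 1))
  eigen : ∀ i, 2 * k ≤ i → i < m → (∃ μ : ℝ, A (v i) = μ • v i) ∧ ∃ ν : ℝ, B (v i) = ν • v i

namespace IsBlockBasis

variable {A B : Module.End ℝ F} {c : ℝ} {m k : ℕ} {v : ℕ → F}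

theorem zero : IsBlockBasis A B c 0 0 v :=
  ⟨le_rfl, .of_isEmpty _, fun _ h => absurd h (Nat.not_lt_zero _),
    fun _ _ h => absurd h (Nat.not_lt_zero _)⟩

theorem update (hb : IsBlockBasis A B c m k v) {z : F} (hz : ‖z‖ = 1)
    (hvz : ∀ i < m, ⟪v i, z⟫ = 0) (hAz : ∃ μ : ℝ, A z = μ • z) (hBz : ∃ ν : ℝ, B z = ν • z) :
    IsBlockBasis A B c (m + 1) k (Function.update v m z) where
  two_mul_le := by have := hb.two_mul_le; omega
  orthonormal := by
    have hv := orthonormal_iff_ite.mp hb.orthonormal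
    have hupd (i : Fin m) : Function.update v m z i = v i := Function.update_of_ne i.is_lt.ne _ _
    rw [orthonormal_iff_ite]
    intro i j
    induction i using Fin.lastCases <;> induction j using Fin.lastCases
    · simp [hz]
    · simp [hupd, real_inner_comm _ z, hvz, Fin.ext_iff, Nat.ne_of_gt]
    · simp [hvz, Fin.ext_iff, Nat.ne_of_lt]
    · simp [hupd, hv]
  isPairBlock s hs := by
    have := hb.two_mul_le
    rw [Function.update_of_ne (by omega), Function.update_of_ne (by omega)]
    exact hb.isPairBlock s hs
  eigen i hki him := by
    rcases eq_or_ne i m with rfl | hi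
    · simpa using ⟨hAz, hBz⟩
    · rw [Function.update_of_ne hi]
      exact hb.eigen i hki (by omega)

theorem pairCons (hb : IsBlockBasis A B c m k v) {p q : F} (hp : ‖p‖ = 1) (hq : ‖q‖ = 1)
    (hpq : ⟪p, q⟫ = 0) (hpv : ∀ i < m, ⟪p, v i⟫ = 0) (hqv : ∀ i < m, ⟪q, v i⟫ = 0)
    (hpair : IsPairBlock A B c p q) :
    IsBlockBasis A B c (m + 2) (k + 1) (_root_.pairCons p q v) where
  two_mul_le := by have := hb.two_mul_le; omega
  orthonormal := by
    have : (fun i : Fin (m + 2) => _root_.pairCons p q v i) =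
        vecCons p (vecCons q fun i : Fin m => v i) := by
      funext i
      exact Fin.cases rfl (Fin.cases rfl fun _ => rfl) i
    rw [this]
    simp [Fin.forall_fin_succ, hp, hq, hpq, hb.orthonormal, hpv, hqv]
  isPairBlock
    | 0, _ => hpair
    | s + 1, hs => hb.isPairBlock s (by omega)
  eigen
    | i + 2, hki, him => hb.eigen i (by omega) (by omega)
    | 0, hki, _ | 1, hki, _ => by omega

theorem inner_eq_zero (hb : IsBlockBasis A B c m k v) {i j : ℕ} (hi : i < m) (hj : j < m)
    (hij : i ≠ j) : ⟪v i, v j⟫ = 0 :=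
  hb.orthonormal.inner_eq_zero (i := ⟨i, hi⟩) (j := ⟨j, hj⟩) (by simpa [Fin.ext_iff] using hij)

theorem isPairBlock_inner_eq (hb : IsBlockBasis A B c m k v) {s : ℕ} (hs : s < k) :
    ⟪v (2 * s), A (v (2 * s))⟫ ^ 2 + ⟪v (2 * s), B (v (2 * s))⟫ ^ 2 +
        ⟪v (2 * s), B (v (2 * s + 1))⟫ ^ 2 = c ∧
      ⟪v (2 * s), A (v (2 * s))⟫ * ⟪v (2 * s), B (v (2 * s + 1))⟫ ≠ 0 ∧
      ⟪v (2 * s + 1), A (v (2 * s + 1))⟫ = -⟪v (2 * s), A (v (2 * s))⟫ ∧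
      ⟪v (2 * s + 1), B (v (2 * s + 1))⟫ = -⟪v (2 * s), B (v (2 * s))⟫ := by
  have := hb.two_mul_le
  exact (hb.isPairBlock s hs).inner_eq (hb.orthonormal.norm_eq_one ⟨2 * s, by omega⟩)
    (hb.orthonormal.norm_eq_one ⟨2 * s + 1, by omega⟩)
    (hb.inner_eq_zero (by omega) (by omega) (by omega))

theorem inner_apply_fst_eq_zero (hb : IsBlockBasis A B c m k v) {i j : ℕ} (hi : i < m)
    (hj : j < m) (hij : i ≠ j) : ⟪v i, A (v j)⟫ = 0 := by
  obtain ⟨μ, hμ⟩ : ∃ μ : ℝ, A (v j) = μ • v j := by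
    by_cases hjk : 2 * k ≤ j
    · exact (hb.eigen j hjk hj).1
    obtain ⟨s, rfl | rfl⟩ := Nat.even_or_odd' j
    · obtain ⟨α, -, -, -, -, hAp, -⟩ := hb.isPairBlock s (by omega)
      exact ⟨α, hAp⟩
    · obtain ⟨α, -, -, -, -, -, hAq, -⟩ := hb.isPairBlock s (by omega)
      exact ⟨-α, hAq⟩
  rw [hμ, real_inner_smul_right, hb.inner_eq_zero hi hj hij, mul_zero]

theorem inner_apply_snd_eq_zero (hb : IsBlockBasis A B c m k v) {i j : ℕ} (hi : i < m)
    (hj : j < m) (hij : i ≠ j) (hblock : ¬(i / 2 = j / 2 ∧ i < 2 * k)) :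
    ⟪v i, B (v j)⟫ = 0 := by
  by_cases hjk : 2 * k ≤ j
  · obtain ⟨ν, hν⟩ := (hb.eigen j hjk hj).2
    rw [hν, real_inner_smul_right, hb.inner_eq_zero hi hj hij, mul_zero]
  have := hb.two_mul_le
  obtain ⟨s, rfl | rfl⟩ := Nat.even_or_odd' j
  all_goals
    obtain ⟨α, β, γ, -, -, -, -, hBp, hBq⟩ := hb.isPairBlock s (by omega)
    have h₀ : ⟪v i, v (2 * s)⟫ = 0 := hb.inner_eq_zero hi (by omega) (by omega)
    have h₁ : ⟪v i, v (2 * s + 1)⟫ = 0 := hb.inner_eq_zero hi (by omega) (by omega)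
  · rw [hBp, inner_add_right, real_inner_smul_right, real_inner_smul_right, h₀, h₁]; ring
  · rw [hBq, inner_sub_right, real_inner_smul_right, real_inner_smul_right, h₀, h₁]; ring

end IsBlockBasis

theorem exists_isBlockBasis [FiniteDimensional ℝ F] {A B : Module.End ℝ F} {c : ℝ}
    (hA : A.IsSymmetric) (hB : B.IsSymmetric) (h : A * A + B * B = c • 1)
    (V : Submodule ℝ F) (hVA : V ∈ A.invtSubmodule) (hVB : V ∈ B.invtSubmodule) :
    ∃ k v, IsBlockBasis A B c (finrank ℝ V) k v ∧ ∀ i < finrank ℝ V, v i ∈ V := by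
  induction hm : finrank ℝ V using Nat.strong_induction_on generalizing V with
  | _ m ih =>
  rcases eq_or_ne V ⊥ with rfl | hV0
  · rw [finrank_bot] at hm
    subst hm
    exact ⟨0, 0, .zero, fun i hi => absurd hi (Nat.not_lt_zero i)⟩
  have peel {U : Submodule ℝ F} (hUV : U ≤ V) (hUA : U ∈ A.invtSubmodule)
      (hUB : U ∈ B.invtSubmodule) (hU0 : U ≠ ⊥) :
      finrank ℝ U + finrank ℝ ↥(Uᗮ ⊓ V) = m ∧ ∃ k v, IsBlockBasis A B c (finrank ℝ ↥(Uᗮ ⊓ V)) k v ∧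
        ∀ i < finrank ℝ ↥(Uᗮ ⊓ V), v i ∈ Uᗮ ⊓ V := by
    have hdim := hm ▸ finrank_add_inf_finrank_orthogonal hUV
    have hU : 0 < finrank ℝ U := finrank_pos_iff.mpr (nontrivial_iff_ne_bot.mpr hU0)
    exact ⟨hdim, ih _ (by omega) _
      (invtSubmodule.inf_mem (hA.orthogonalComplement_mem_invtSubmodule hUA) hVA)
      (invtSubmodule.inf_mem (hB.orthogonalComplement_mem_invtSubmodule hUB) hVB) rfl⟩
  rcases exists_common_eigenvector_or_isPairBlock hA hB h hVA hVB hV0 with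
    ⟨z, hzV, hz, ⟨μ, hAz⟩, ν, hBz⟩ | ⟨p, hpV, q, hqV, hp, hq, hpq, hpair⟩
  · have hz0 : z ≠ 0 := by rintro rfl; simp at hz
    obtain ⟨hdim, k, v, hb, hv⟩ := peel ((span_singleton_le_iff_mem _ _).mpr hzV)
      (span_singleton_mem_invtSubmodule hAz) (span_singleton_mem_invtSubmodule hBz)
      (by simpa using hz0)
    rw [finrank_span_singleton hz0, add_comm] at hdim
    subst hdim
    refine ⟨k, Function.update v _ z, hb.update hz
      (fun i hi => inner_left_of_mem_orthogonal (mem_span_singleton_self z) (hv i hi).1)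
      ⟨μ, hAz⟩ ⟨ν, hBz⟩, fun i hi => ?_⟩
    rcases eq_or_ne i (finrank ℝ ↥((ℝ ∙ z)ᗮ ⊓ V)) with rfl | hi'
    · simpa using hzV
    · rw [Function.update_of_ne hi']
      exact (hv i (by omega)).2
  · obtain ⟨hUA, hUB⟩ := hpair.span_mem_invtSubmodule
    have hU0 : span ℝ {p, q} ≠ ⊥ :=
      (Submodule.ne_bot_iff _).mpr ⟨p, subset_span (by simp), by rintro rfl; simp at hp⟩
    obtain ⟨hdim, k, v, hb, hv⟩ := peel (span_le.mpr (Set.insert_subset_iff.mpr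
      ⟨hpV, Set.singleton_subset_iff.mpr hqV⟩)) hUA hUB hU0
    rw [finrank_span_pair_of_orthonormal hp hq hpq, add_comm] at hdim
    subst hdim
    refine ⟨k + 1, pairCons p q v, hb.pairCons hp hq hpq
      (fun i hi => inner_right_of_mem_orthogonal (subset_span (by simp)) (hv i hi).1)
      (fun i hi => inner_right_of_mem_orthogonal (subset_span (by simp)) (hv i hi).1) hpair,
      fun i hi => ?_⟩
    match i, hi with
    | 0, _ => exact hpV
    | 1, _ => exact hqV
    | i + 2, hi => exact (hv i (by omega)).2

theorem Matrix.transpose_mul_mul_apply_eq_inner {ι κ : Type*} [Fintype ι] [DecidableEq ι]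
    (b : κ → EuclideanSpace ℝ ι) (Q : Matrix ι ι ℝ) (i j : κ) :
    ((of fun a j => b j a)ᵀ * Q * of fun a j => b j a) i j = ⟪b i, toEuclideanLin Q (b j)⟫ := by
  rw [EuclideanSpace.inner_eq_star_dotProduct, toLpLin_apply, Matrix.mul_assoc, star_trivial,
    dotProduct_comm]
  rfl

theorem Matrix.of_mem_orthogonalGroup_of_orthonormal {ι : Type*} [Fintype ι] [DecidableEq ι]
    {b : ι → EuclideanSpace ℝ ι} (hb : Orthonormal ℝ b) :
    (of fun a j => b j a) ∈ orthogonalGroup ι ℝ := by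
  rw [mem_orthogonalGroup_iff', ← Matrix.mul_one (of fun a j => b j a)ᵀ]
  ext i j
  rw [transpose_mul_mul_apply_eq_inner, toLpLin_one, LinearMap.id_apply,
    orthonormal_iff_ite.mp hb, one_apply]

theorem stmt0 (n : ℕ) (c : ℝ) (Q1 Q2 : Matrix (Fin n) (Fin n) ℝ)
    (hQ1 : Q1.IsSymm) (hQ2 : Q2.IsSymm)
    (h : Q1 * Q1 + Q2 * Q2 = c • (1 : Matrix (Fin n) (Fin n) ℝ)) :
    ∃ P ∈ Matrix.orthogonalGroup (Fin n) ℝ,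
      ∃ (k : ℕ) (hk : 2 * k ≤ n) (α β γ : ℕ → ℝ),
        (∀ s, s < k → α s ^ 2 + β s ^ 2 + γ s ^ 2 = c ∧ α s * γ s ≠ 0) ∧
        (∀ s, ∀ hs : s < k,
          (Pᵀ * Q1 * P) ⟨2 * s, by omega⟩ ⟨2 * s, by omega⟩ = α s ∧
          (Pᵀ * Q1 * P) ⟨2 * s + 1, by omega⟩ ⟨2 * s + 1, by omega⟩ = -α s ∧
          (Pᵀ * Q1 * P) ⟨2 * s, by omega⟩ ⟨2 * s + 1, by omega⟩ = 0 ∧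
          (Pᵀ * Q2 * P) ⟨2 * s, by omega⟩ ⟨2 * s, by omega⟩ = β s ∧
          (Pᵀ * Q2 * P) ⟨2 * s + 1, by omega⟩ ⟨2 * s + 1, by omega⟩ = -β s ∧
          (Pᵀ * Q2 * P) ⟨2 * s, by omega⟩ ⟨2 * s + 1, by omega⟩ = γ s) ∧
        (∀ i j : Fin n, i ≠ j →
          ¬((i : ℕ) / 2 = (j : ℕ) / 2 ∧ (i : ℕ) < 2 * k) →
          (Pᵀ * Q1 * P) i j = 0 ∧ (Pᵀ * Q2 * P) i j = 0) := by
  set A := toEuclideanLin Q1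
  set B := toEuclideanLin Q2
  have hA : A.IsSymmetric := isSymmetric_toEuclideanLin_iff.mpr (isHermitian_iff_isSymm.mpr hQ1)
  have hB : B.IsSymmetric := isSymmetric_toEuclideanLin_iff.mpr (isHermitian_iff_isSymm.mpr hQ2)
  have hAB : A * A + B * B = c • 1 := by
    have := congrArg toEuclideanLin h
    simp only [map_add, map_smul, toLpLin_mul_same, toLpLin_one] at this
    exact this
  obtain ⟨k, v, hb, -⟩ := exists_isBlockBasis hA hB hAB ⊤ (invtSubmodule.top_mem A)
    (invtSubmodule.top_mem B)
  rw [finrank_top, finrank_euclideanSpace_fin] at hb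
  have hP := transpose_mul_mul_apply_eq_inner fun i : Fin n => v i
  have := hb.two_mul_le
  refine ⟨_, of_mem_orthogonalGroup_of_orthonormal hb.orthonormal, k, hb.two_mul_le,
    fun s => ⟪v (2 * s), A (v (2 * s))⟫, fun s => ⟪v (2 * s), B (v (2 * s))⟫,
    fun s => ⟪v (2 * s), B (v (2 * s + 1))⟫,
    fun s hs => (hb.isPairBlock_inner_eq hs).imp_right And.left, fun s hs => ?_,
    fun i j hij hblock => ?_⟩
  · obtain ⟨-, -, hA', hB'⟩ := hb.isPairBlock_inner_eq hs
    simp only [hP]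
    exact ⟨rfl, hA', hb.inner_apply_fst_eq_zero (by omega) (by omega) (by omega), rfl, hB', rfl⟩
  · have hij' : (i : ℕ) ≠ j := Fin.val_ne_of_ne hij
    rw [hP, hP]
    exact ⟨hb.inner_apply_fst_eq_zero i.2 j.2 hij', hb.inner_apply_snd_eq_zero i.2 j.2 hij' hblock⟩
end

section
/- Let A¹, ..., Aᵖ be symmetric operators on ℝⁿ, n ≥ 2, that are simultaneously diagonalizable with eigenvalues λᵢ^σ = ⟨A^σ eᵢ, eᵢ⟩ in a common orthonormal eigenbasis e₁,...,eₙ. Set H^σ = Tr A^σ and T^{στ} = Tr(A^σ A^τ). Suppose there exist constants c₁', c₂' such that for all i: Σ_σ (H^σ λᵢ^σ − (λᵢ^σ)²) = c₁', and for all i, j: Σ_{σ,τ} (T^{στ} λᵢ^σ λⱼ^τ + λᵢ^σ λⱼ^σ λᵢ^τ λⱼ^τ − λᵢ^σ λⱼ^σ (λⱼ^τ)² − λⱼ^σ λᵢ^σ (λᵢ^τ)²) = c₂'. Then (n−1)·c₂' = (c₁')². -/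
/-!
Conjugating by the common orthonormal eigenbasis turns the traces into sums over the spectrum,
`H^σ = ∑ₖ λₖ^σ` and `T^{στ} = ∑ₖ λₖ^σ λₖ^τ`, so both hypotheses only involve the Gram matrix
`Bᵢⱼ = ∑_σ λᵢ^σ λⱼ^σ` of the eigenvalue vectors: its row sums are `c₁' + Bᵢᵢ`, and
`(B²)ᵢⱼ + Bᵢⱼ² - Bᵢⱼ (Bᵢᵢ + Bⱼⱼ) = c₂'`. Summing the second identity over `j` and using the row sums
gives `n c₂' = c₁'² + (B²)ᵢᵢ - Bᵢᵢ²`, and the case `j = i` says that the last two terms add up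
to `c₂'`.
-/

open Matrix Finset

namespace Matrix

variable {m ι κ R : Type*} [Fintype m] [Fintype ι] [Fintype κ] [CommRing R]

theorem IsDiag.trace_mul {D : Matrix m m R} (hD : D.IsDiag) (E : Matrix m m R) :
    (D * E).trace = ∑ i, D i i * E i i := by
  refine sum_congr rfl fun i _ => ?_
  rw [diag_apply, mul_apply, sum_eq_single i (fun j _ hji => by rw [hD hji.symm, zero_mul])
    (by simp)]

section Orthogonal

variable [DecidableEq m]

theorem trace_transpose_mul_mul_of_mem_orthogonalGroup {P : Matrix m m R}
    (hP : P ∈ orthogonalGroup m R) (A : Matrix m m R) : (Pᵀ * A * P).trace = A.trace := by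
  rw [trace_mul_cycle, (mem_orthogonalGroup_iff m R).mp hP, one_mul]

theorem transpose_mul_mul_mul_of_mem_orthogonalGroup {P : Matrix m m R}
    (hP : P ∈ orthogonalGroup m R) (A B : Matrix m m R) :
    Pᵀ * (A * B) * P = (Pᵀ * A * P) * (Pᵀ * B * P) := by
  simp only [Matrix.mul_assoc, ← Matrix.mul_assoc P, (mem_orthogonalGroup_iff m R).mp hP,
    Matrix.one_mul]

end Orthogonal

theorem sum_colSum_mul_sub_sq (L : Matrix ι κ R) (i : ι) :
    ∑ σ, ((∑ k, L k σ) * L i σ - L i σ ^ 2) = ∑ k, (L * Lᵀ) i k - (L * Lᵀ) i i := by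
  simp only [mul_apply, transpose_apply, sum_sub_distrib, sum_mul, sq]
  rw [sum_comm]
  simp only [mul_comm]

theorem sum_sum_colDot_mul_add_sub (L : Matrix ι κ R) (i j : ι) :
    ∑ σ, ∑ τ, ((∑ k, L k σ * L k τ) * L i σ * L j τ
          + L i σ * L j σ * L i τ * L j τ
          - L i σ * L j σ * (L j τ) ^ 2
          - L j σ * L i σ * (L i τ) ^ 2)
      = (L * Lᵀ * (L * Lᵀ)) i j + (L * Lᵀ) i j ^ 2
        - (L * Lᵀ) i j * ((L * Lᵀ) i i + (L * Lᵀ) j j) := by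
  have hsq : (L * Lᵀ * (L * Lᵀ)) i j = ∑ σ, ∑ τ, (∑ k, L k σ * L k τ) * L i σ * L j τ := by
    rw [Matrix.mul_assoc, ← Matrix.mul_assoc Lᵀ, ← Matrix.mul_assoc]
    simp only [mul_apply, transpose_apply, sum_mul, mul_sum]
    rw [sum_comm]
    exact sum_congr rfl fun σ _ => sum_congr rfl fun τ _ => sum_congr rfl fun k _ => by ring
  rw [hsq]
  simp only [mul_apply, transpose_apply, sq, mul_add, sum_mul_sum, ← sum_add_distrib,
    ← sum_sub_distrib]
  exact sum_congr rfl fun σ _ => sum_congr rfl fun τ _ => by ring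

theorem IsSymm.card_sub_one_mul_eq_sq [Nonempty ι] {B : Matrix ι ι R} (hB : B.IsSymm)
    {c₁ c₂ : R} (h1 : ∀ i, ∑ k, B i k - B i i = c₁)
    (h2 : ∀ i j, (B * B) i j + B i j ^ 2 - B i j * (B i i + B j j) = c₂) :
    ((Fintype.card ι : R) - 1) * c₂ = c₁ ^ 2 := by
  obtain ⟨i⟩ := ‹Nonempty ι›
  have hrow : ∀ k, ∑ j, B k j = c₁ + B k k := fun k => by linear_combination h1 k
  have hsq_row : ∑ j, (B * B) i j = c₁ * (c₁ + B i i) + ∑ k, B i k * B k k := by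
    simp only [mul_apply]
    rw [sum_comm]
    simp only [← mul_sum, hrow, mul_add, sum_add_distrib, ← sum_mul]
    ring
  have hsq_diag : ∑ j, B i j ^ 2 = (B * B) i i := by
    simp only [mul_apply, sq, hB.apply i]
  have hsum : ∑ j, ((B * B) i j + B i j ^ 2 - B i j * (B i i + B j j)) = c₁ ^ 2 + c₂ := by
    simp only [mul_add, sum_add_distrib, sum_sub_distrib, hsq_row, hsq_diag, ← sum_mul, hrow]
    linear_combination h2 i i
  simp only [h2, sum_const, card_univ, nsmul_eq_mul] at hsum
  linear_combination hsum

end Matrix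

theorem stmt3_general (n p : ℕ) (hn : 2 ≤ n) (A : Fin p → Matrix (Fin n) (Fin n) ℝ)
    (P : Matrix (Fin n) (Fin n) ℝ) (hP : P ∈ Matrix.orthogonalGroup (Fin n) ℝ)
    (hdiag : ∀ σ, (Pᵀ * A σ * P).IsDiag)
    (lam : Fin n → Fin p → ℝ) (hlam : ∀ i σ, lam i σ = (Pᵀ * A σ * P) i i)
    (c₁ c₂ : ℝ)
    (h1 : ∀ i, ∑ σ, ((A σ).trace * lam i σ - (lam i σ) ^ 2) = c₁)
    (h2 : ∀ i j, ∑ σ, ∑ τ,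
        ((A σ * A τ).trace * lam i σ * lam j τ
          + lam i σ * lam j σ * lam i τ * lam j τ
          - lam i σ * lam j σ * (lam j τ) ^ 2
          - lam j σ * lam i σ * (lam i τ) ^ 2) = c₂) :
    ((n : ℝ) - 1) * c₂ = c₁ ^ 2 := by
  have : Nonempty (Fin n) := ⟨⟨0, by omega⟩⟩
  have htrace : ∀ σ, (A σ).trace = ∑ k, lam k σ := fun σ => by
    rw [← trace_transpose_mul_mul_of_mem_orthogonalGroup hP]
    simp only [trace, diag_apply, hlam]
  have htrace_mul : ∀ σ τ, (A σ * A τ).trace = ∑ k, lam k σ * lam k τ := fun σ τ => by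
    rw [← trace_transpose_mul_mul_of_mem_orthogonalGroup hP,
      transpose_mul_mul_mul_of_mem_orthogonalGroup hP, (hdiag σ).trace_mul]
    simp only [hlam]
  simp only [htrace, htrace_mul] at h1 h2
  have hgram : (of lam * (of lam)ᵀ).IsSymm := by
    rw [IsSymm, transpose_mul, transpose_transpose]
  simpa using hgram.card_sub_one_mul_eq_sq
    (fun i => (sum_colSum_mul_sub_sq (of lam) i).symm.trans (h1 i))
    (fun i j => (sum_sum_colDot_mul_add_sub (of lam) i j).symm.trans (h2 i j))

theorem stmt3 (n p : ℕ) (hn : 2 ≤ n) (A : Fin p → Matrix (Fin n) (Fin n) ℝ)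
    (hsym : ∀ σ, (A σ).IsSymm)
    (P : Matrix (Fin n) (Fin n) ℝ) (hP : P ∈ Matrix.orthogonalGroup (Fin n) ℝ)
    (hdiag : ∀ σ, (Pᵀ * A σ * P).IsDiag)
    (lam : Fin n → Fin p → ℝ) (hlam : ∀ i σ, lam i σ = (Pᵀ * A σ * P) i i)
    (c₁ c₂ : ℝ)
    (h1 : ∀ i, ∑ σ, ((A σ).trace * lam i σ - (lam i σ) ^ 2) = c₁)
    (h2 : ∀ i j, ∑ σ, ∑ τ,
        ((A σ * A τ).trace * lam i σ * lam j τ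
          + lam i σ * lam j σ * lam i τ * lam j τ
          - lam i σ * lam j σ * (lam j τ) ^ 2
          - lam j σ * lam i σ * (lam i τ) ^ 2) = c₂) :
    ((n : ℝ) - 1) * c₂ = c₁ ^ 2 :=
  stmt3_general n p hn A P hP hdiag lam hlam c₁ c₂ h1 h2
end

section
/- Let A¹, A² be trace-free symmetric operators on ℝⁿ, n ≥ 4, whose matrices contain two pairs of 2×2 invariant blocks: on span(e₁,e₂), A¹ = diag(α₁,−α₁), A² = [[β₁,γ₁],[γ₁,−β₁]]; on span(e₃,e₄), A¹ = diag(α₂,−α₂), A² = [[β₂,γ₂],[γ₂,−β₂]]; with γ₁γ₂ ≠ 0. Then the quartic identity Σ_{σ,τ}(⟨A^σX,X⟩⟨A^τX,X⟩T^{στ} + ⟨A^σX,A^τX⟩² − ⟨A^σX,X⟩⟨A^τA^σA^τX,X⟩ − ⟨A^τX,X⟩⟨A^σA^τA^σX,X⟩) = c₂'‖X‖⁴ cannot hold for all X ∈ ℝⁿ for any constant c₂'. -/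
open Matrix

/-- The left-hand side of the quartic 2-stein identity for shape operators `A`. -/
noncomputable def quarticLHS {n p : ℕ} (A : Fin p → Matrix (Fin n) (Fin n) ℝ)
    (X : Fin n → ℝ) : ℝ :=
  ∑ σ, ∑ τ,
    (((A σ *ᵥ X) ⬝ᵥ X) * ((A τ *ᵥ X) ⬝ᵥ X) * (A σ * A τ).trace
      + ((A σ *ᵥ X) ⬝ᵥ (A τ *ᵥ X)) ^ 2
      - ((A σ *ᵥ X) ⬝ᵥ X) * (((A τ * A σ * A τ) *ᵥ X) ⬝ᵥ X)
      - ((A τ *ᵥ X) ⬝ᵥ X) * (((A σ * A τ * A σ) *ᵥ X) ⬝ᵥ X))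

/-- Auxiliary: the vector in `ℝⁿ` with first four coordinates `p q r s` and zeros after. -/
def Evec (n : ℕ) (p q r s : ℝ) : Fin n → ℝ := fun i =>
  if (i : ℕ) = 0 then p else if (i : ℕ) = 1 then q else if (i : ℕ) = 2 then r
  else if (i : ℕ) = 3 then s else 0

set_option maxHeartbeats 2000000 in
theorem stmt9 (n : ℕ) (hn : 4 ≤ n) (A1 A2 : Matrix (Fin n) (Fin n) ℝ)
    (α₁ β₁ γ₁ α₂ β₂ γ₂ : ℝ)
    (hA1 : A1.IsSymm) (hA2 : A2.IsSymm)
    (htrA1 : A1.trace = 0) (htrA2 : A2.trace = 0)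
    (h00 : A1 ⟨0, by omega⟩ ⟨0, by omega⟩ = α₁)
    (h11 : A1 ⟨1, by omega⟩ ⟨1, by omega⟩ = -α₁)
    (h01 : A1 ⟨0, by omega⟩ ⟨1, by omega⟩ = 0)
    (g00 : A2 ⟨0, by omega⟩ ⟨0, by omega⟩ = β₁)
    (g11 : A2 ⟨1, by omega⟩ ⟨1, by omega⟩ = -β₁)
    (g01 : A2 ⟨0, by omega⟩ ⟨1, by omega⟩ = γ₁)
    (h22 : A1 ⟨2, by omega⟩ ⟨2, by omega⟩ = α₂)
    (h33 : A1 ⟨3, by omega⟩ ⟨3, by omega⟩ = -α₂)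
    (h23 : A1 ⟨2, by omega⟩ ⟨3, by omega⟩ = 0)
    (g22 : A2 ⟨2, by omega⟩ ⟨2, by omega⟩ = β₂)
    (g33 : A2 ⟨3, by omega⟩ ⟨3, by omega⟩ = -β₂)
    (g23 : A2 ⟨2, by omega⟩ ⟨3, by omega⟩ = γ₂)
    (hinv : ∀ i j : Fin n, (i : ℕ) < 4 → (i : ℕ) / 2 ≠ (j : ℕ) / 2 →
      A1 i j = 0 ∧ A2 i j = 0)
    (hγ : γ₁ * γ₂ ≠ 0) :
    ¬ ∃ c₂ : ℝ, ∀ X : Fin n → ℝ, quarticLHS ![A1, A2] X = c₂ * (X ⬝ᵥ X) ^ 2 := by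
  rintro ⟨c, hc⟩
  -- the four distinguished indices
  set e0 : Fin n := ⟨0, by omega⟩ with he0
  set e1 : Fin n := ⟨1, by omega⟩ with he1
  set e2 : Fin n := ⟨2, by omega⟩ with he2
  set e3 : Fin n := ⟨3, by omega⟩ with he3
  have sym1 : ∀ i j, A1 i j = A1 j i := fun i j => hA1.apply j i
  have sym2 : ∀ i j, A2 i j = A2 j i := fun i j => hA2.apply j i
  -- zero entries across blocks, in both orders
  have hz : ∀ i j : Fin n, (i : ℕ) / 2 ≠ (j : ℕ) / 2 → ((i : ℕ) < 4 ∨ (j : ℕ) < 4) →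
      A1 i j = 0 ∧ A2 i j = 0 := by
    intro i j hij h
    rcases h with h | h
    · exact hinv i j h hij
    · obtain ⟨z1, z2⟩ := hinv j i h (Ne.symm hij)
      exact ⟨(sym1 i j).trans z1, (sym2 i j).trans z2⟩
  have h10 : A1 e1 e0 = 0 := (sym1 e1 e0).trans h01
  have g10 : A2 e1 e0 = γ₁ := (sym2 e1 e0).trans g01
  have h32 : A1 e3 e2 = 0 := (sym1 e3 e2).trans h23
  have g32 : A2 e3 e2 = γ₂ := (sym2 e3 e2).trans g23
  -- collapsing sums over `Fin n` for functions supported in the first four coordinates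
  have h4 : ∀ g : Fin n → ℝ, (∀ i : Fin n, 4 ≤ (i : ℕ) → g i = 0) →
      ∑ i, g i = g e0 + g e1 + g e2 + g e3 := by
    intro g hg
    have hsub : ({e0, e1, e2, e3} : Finset (Fin n)) ⊆ Finset.univ := Finset.subset_univ _
    rw [← Finset.sum_subset hsub (fun i _ hi => by
      apply hg
      simp only [Finset.mem_insert, Finset.mem_singleton, he0, he1, he2, he3, Fin.ext_iff] at hi
      omega)]
    rw [Finset.sum_insert (by simp [he0, he1, he2, he3, Fin.ext_iff]),
      Finset.sum_insert (by simp [he1, he2, he3, Fin.ext_iff]),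
      Finset.sum_insert (by simp [he2, he3, Fin.ext_iff]), Finset.sum_singleton]
    ring
  have hEval0 : ∀ p q r s : ℝ, Evec n p q r s e0 = p := fun _ _ _ _ => by simp [Evec, he0]
  have hEval1 : ∀ p q r s : ℝ, Evec n p q r s e1 = q := fun _ _ _ _ => by simp [Evec, he1]
  have hEval2 : ∀ p q r s : ℝ, Evec n p q r s e2 = r := fun _ _ _ _ => by simp [Evec, he2]
  have hEval3 : ∀ p q r s : ℝ, Evec n p q r s e3 = s := fun _ _ _ _ => by simp [Evec, he3]
  have hEvalBig : ∀ (p q r s : ℝ) (i : Fin n), 4 ≤ (i : ℕ) → Evec n p q r s i = 0 := by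
    intro p q r s i hi
    simp only [Evec]
    rw [if_neg (by omega), if_neg (by omega), if_neg (by omega), if_neg (by omega)]
  -- the index cases
  have hi4 : ∀ i : Fin n, (i : ℕ) < 4 → i = e0 ∨ i = e1 ∨ i = e2 ∨ i = e3 := by
    intro i h
    simp only [he0, he1, he2, he3, Fin.ext_iff]
    omega
  -- action of A1 and A2 on such vectors
  have hmul : ∀ (A : Matrix (Fin n) (Fin n) ℝ) (p q r s : ℝ) (i : Fin n),
      (A *ᵥ Evec n p q r s) i = A i e0 * p + A i e1 * q + A i e2 * r + A i e3 * s := by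
    intro A p q r s i
    show ∑ j, A i j * Evec n p q r s j = _
    rw [h4 (fun j => A i j * Evec n p q r s j)
      (fun j hj => by simp only [hEvalBig p q r s j hj, mul_zero])]
    simp only [hEval0, hEval1, hEval2, hEval3]
  have hm1 : ∀ p q r s : ℝ,
      A1 *ᵥ Evec n p q r s = Evec n (α₁ * p) (-α₁ * q) (α₂ * r) (-α₂ * s) := by
    intro p q r s
    funext i
    by_cases hi : (i : ℕ) < 4
    · rcases hi4 i hi with rfl | rfl | rfl | rfl
      · rw [hmul, hEval0, h00, h01, (hz e0 e2 (by simp [he0, he2]) (by simp [he0])).1,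
          (hz e0 e3 (by simp [he0, he3]) (by simp [he0])).1]; ring
      · rw [hmul, hEval1, h10, h11, (hz e1 e2 (by simp [he1, he2]) (by simp [he1])).1,
          (hz e1 e3 (by simp [he1, he3]) (by simp [he1])).1]; ring
      · rw [hmul, hEval2, h22, h23, (hz e2 e0 (by simp [he0, he2]) (by simp [he2])).1,
          (hz e2 e1 (by simp [he1, he2]) (by simp [he2])).1]; ring
      · rw [hmul, hEval3, h32, h33, (hz e3 e0 (by simp [he0, he3]) (by simp [he3])).1,
          (hz e3 e1 (by simp [he1, he3]) (by simp [he3])).1]; ring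
    · rw [hmul, hEvalBig _ _ _ _ i (by omega),
        (hz i e0 (by simp [he0]; omega) (by simp [he0])).1,
        (hz i e1 (by simp [he1]; omega) (by simp [he1])).1,
        (hz i e2 (by simp [he2]; omega) (by simp [he2])).1,
        (hz i e3 (by simp [he3]; omega) (by simp [he3])).1]
      ring
  have hm2 : ∀ p q r s : ℝ,
      A2 *ᵥ Evec n p q r s
        = Evec n (β₁ * p + γ₁ * q) (γ₁ * p - β₁ * q) (β₂ * r + γ₂ * s) (γ₂ * r - β₂ * s) := by
    intro p q r s
    funext i
    by_cases hi : (i : ℕ) < 4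
    · rcases hi4 i hi with rfl | rfl | rfl | rfl
      · rw [hmul, hEval0, g00, g01, (hz e0 e2 (by simp [he0, he2]) (by simp [he0])).2,
          (hz e0 e3 (by simp [he0, he3]) (by simp [he0])).2]; ring
      · rw [hmul, hEval1, g10, g11, (hz e1 e2 (by simp [he1, he2]) (by simp [he1])).2,
          (hz e1 e3 (by simp [he1, he3]) (by simp [he1])).2]; ring
      · rw [hmul, hEval2, g22, g23, (hz e2 e0 (by simp [he0, he2]) (by simp [he2])).2,
          (hz e2 e1 (by simp [he1, he2]) (by simp [he2])).2]; ring
      · rw [hmul, hEval3, g32, g33, (hz e3 e0 (by simp [he0, he3]) (by simp [he3])).2,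
          (hz e3 e1 (by simp [he1, he3]) (by simp [he3])).2]; ring
    · rw [hmul, hEvalBig _ _ _ _ i (by omega),
        (hz i e0 (by simp [he0]; omega) (by simp [he0])).2,
        (hz i e1 (by simp [he1]; omega) (by simp [he1])).2,
        (hz i e2 (by simp [he2]; omega) (by simp [he2])).2,
        (hz i e3 (by simp [he3]; omega) (by simp [he3])).2]
      ring
  have hd : ∀ p q r s p' q' r' s' : ℝ,
      Evec n p q r s ⬝ᵥ Evec n p' q' r' s' = p * p' + q * q' + r * r' + s * s' := by
    intro p q r s p' q' r' s'
    show ∑ j, Evec n p q r s j * Evec n p' q' r' s' j = _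
    rw [h4 _ (fun j hj => by simp only [hEvalBig p q r s j hj, zero_mul])]
    simp only [hEval0, hEval1, hEval2, hEval3]
  -- evaluate the identity at two vectors
  have eq1 := hc (Evec n 1 1 1 1)
  have eq2 := hc (Evec n 1 (-1) 1 1)
  simp only [quarticLHS, Fin.sum_univ_two, Matrix.cons_val_zero, Matrix.cons_val_one,
    Matrix.head_cons, ← Matrix.mulVec_mulVec, hm1, hm2, hd] at eq1 eq2
  -- the key coefficient identity
  have hkey : γ₁ * γ₂ * ((A2 * A2).trace + α₁ ^ 2 + α₂ ^ 2
      - β₁ ^ 2 - β₂ ^ 2 - γ₁ ^ 2 - γ₂ ^ 2) = 0 := by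
    linear_combination (eq1 - eq2) / 16
  have hpar : (A2 * A2).trace + α₁ ^ 2 + α₂ ^ 2 - β₁ ^ 2 - β₂ ^ 2 - γ₁ ^ 2 - γ₂ ^ 2 = 0 :=
    (mul_eq_zero.mp hkey).resolve_left hγ
  -- the trace lower bound
  have htr : (A2 * A2).trace = ∑ i, ∑ j, (A2 i j) ^ 2 := by
    rw [Matrix.trace]
    refine Finset.sum_congr rfl fun i _ => ?_
    rw [Matrix.diag_apply, Matrix.mul_apply]
    refine Finset.sum_congr rfl fun j _ => ?_
    rw [← sym2 i j, sq]
  have inner_bound : ∀ (i j k : Fin n), j ≠ k →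
      (A2 i j) ^ 2 + (A2 i k) ^ 2 ≤ ∑ j', (A2 i j') ^ 2 := by
    intro i j k hjk
    have := Finset.sum_le_sum_of_subset_of_nonneg (f := fun j' => (A2 i j') ^ 2)
      (Finset.subset_univ ({j, k} : Finset (Fin n))) (fun x _ _ => sq_nonneg _)
    rwa [Finset.sum_pair hjk] at this
  have outer : (∑ j', (A2 e0 j') ^ 2) + (∑ j', (A2 e1 j') ^ 2) + (∑ j', (A2 e2 j') ^ 2)
      + (∑ j', (A2 e3 j') ^ 2) ≤ ∑ i, ∑ j, (A2 i j) ^ 2 := by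
    have := Finset.sum_le_sum_of_subset_of_nonneg (f := fun i => ∑ j, (A2 i j) ^ 2)
      (Finset.subset_univ ({e0, e1, e2, e3} : Finset (Fin n)))
      (fun x _ _ => Finset.sum_nonneg fun j _ => sq_nonneg _)
    rw [Finset.sum_insert (by simp [he0, he1, he2, he3, Fin.ext_iff]),
      Finset.sum_insert (by simp [he1, he2, he3, Fin.ext_iff]),
      Finset.sum_insert (by simp [he2, he3, Fin.ext_iff]), Finset.sum_singleton] at this
    linarith
  have hb : 2 * (β₁ ^ 2 + γ₁ ^ 2 + β₂ ^ 2 + γ₂ ^ 2) ≤ (A2 * A2).trace := by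
    rw [htr]
    have b0 := inner_bound e0 e0 e1 (by simp [he0, he1, Fin.ext_iff])
    have b1 := inner_bound e1 e0 e1 (by simp [he0, he1, Fin.ext_iff])
    have b2 := inner_bound e2 e2 e3 (by simp [he2, he3, Fin.ext_iff])
    have b3 := inner_bound e3 e2 e3 (by simp [he2, he3, Fin.ext_iff])
    rw [g00, g01] at b0
    rw [g10, g11, neg_sq] at b1
    rw [g22, g23] at b2
    rw [g32, g33, neg_sq] at b3
    linarith [b0, b1, b2, b3, outer]
  have hγ1 : γ₁ ≠ 0 := fun h => hγ (by simp [h])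
  have hγ1sq : 0 < γ₁ ^ 2 := by positivity
  have final : γ₁ ^ 2 + α₁ ^ 2 + α₂ ^ 2 + β₁ ^ 2 + β₂ ^ 2 + γ₂ ^ 2 ≤ 0 := by
    linarith [hpar, hb]
  linarith [final, hγ1sq, sq_nonneg α₁, sq_nonneg α₂, sq_nonneg β₁, sq_nonneg β₂, sq_nonneg γ₂]
end

section
/- Let A¹, A² be trace-free symmetric operators on ℝⁿ, n ≥ 3, with Tr(A¹A²) = 0, satisfying (A¹)² + (A²)² = c₃·Id on the subspace span(e₁,e₂,e₃), with top-left 3×3 corners A¹ = diag(α, −α, λ) and A² = [[β,γ,0],[γ,−β,0],[0,0,μ]], αγ ≠ 0, and α² + β² + γ² = λ² + μ². Then the quartic identity Σ_{σ,τ}(⟨A^σX,X⟩⟨A^τX,X⟩T^{στ} + ⟨A^σX,A^τX⟩² − ⟨A^σX,X⟩⟨A^τA^σA^τX,X⟩ − ⟨A^τX,X⟩⟨A^σA^τA^σX,X⟩) = c₂'‖X‖⁴ cannot hold for all X ∈ ℝⁿ for any constant c₂'. -/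
set_option maxHeartbeats 4000000


open Matrix

section Aux

variable {n : ℕ}

/-- A vector supported on three coordinates. -/
def V3 (i0 i1 i2 : Fin n) (p q r : ℝ) : Fin n → ℝ :=
  fun k => if k = i0 then p else if k = i1 then q else if k = i2 then r else 0

lemma sumV3 {i0 i1 i2 : Fin n} (h01 : i0 ≠ i1) (h02 : i0 ≠ i2) (h12 : i1 ≠ i2)
    (p q r : ℝ) (f : Fin n → ℝ) :
    ∑ k, V3 i0 i1 i2 p q r k * f k = p * f i0 + q * f i1 + r * f i2 := by
  have key : ∀ k, V3 i0 i1 i2 p q r k * f k =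
      (if k = i0 then p * f k else 0) + (if k = i1 then q * f k else 0) +
      (if k = i2 then r * f k else 0) := by
    intro k
    unfold V3
    by_cases h0 : k = i0
    · subst h0
      simp [Ne.symm h01, Ne.symm h02, h01, h02]
    · by_cases h1 : k = i1
      · subst h1; simp [h0, h12]
      · by_cases h2 : k = i2
        · subst h2; simp [h0, h1]
        · simp [h0, h1, h2]
  rw [Finset.sum_congr rfl (fun k _ => key k)]
  simp [Finset.sum_add_distrib]

lemma dotV3 {i0 i1 i2 : Fin n} (h01 : i0 ≠ i1) (h02 : i0 ≠ i2) (h12 : i1 ≠ i2)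
    (p q r p' q' r' : ℝ) :
    V3 i0 i1 i2 p q r ⬝ᵥ V3 i0 i1 i2 p' q' r' = p * p' + q * q' + r * r' := by
  rw [dotProduct, sumV3 h01 h02 h12]
  simp [V3, h01, h02, h12, Ne.symm h01, Ne.symm h02, Ne.symm h12]

lemma mulVecV3 (A : Matrix (Fin n) (Fin n) ℝ) {i0 i1 i2 : Fin n}
    (h01 : i0 ≠ i1) (h02 : i0 ≠ i2) (h12 : i1 ≠ i2)
    (hout : ∀ k : Fin n, k ≠ i0 → k ≠ i1 → k ≠ i2 →
      A k i0 = 0 ∧ A k i1 = 0 ∧ A k i2 = 0)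
    (p q r : ℝ) :
    A *ᵥ V3 i0 i1 i2 p q r = V3 i0 i1 i2
      (p * A i0 i0 + q * A i0 i1 + r * A i0 i2)
      (p * A i1 i0 + q * A i1 i1 + r * A i1 i2)
      (p * A i2 i0 + q * A i2 i1 + r * A i2 i2) := by
  funext k
  have h1 : (A *ᵥ V3 i0 i1 i2 p q r) k = ∑ j, V3 i0 i1 i2 p q r j * A k j := by
    simp [Matrix.mulVec, dotProduct, mul_comm]
  rw [h1, sumV3 h01 h02 h12]
  by_cases hk0 : k = i0
  · subst hk0; simp [V3]
  · by_cases hk1 : k = i1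
    · subst hk1; simp [V3, hk0]
    · by_cases hk2 : k = i2
      · subst hk2; simp [V3, hk0, hk1]
      · obtain ⟨z0, z1, z2⟩ := hout k hk0 hk1 hk2
        simp [V3, hk0, hk1, hk2, z0, z1, z2]

end Aux

theorem stmt11 (n : ℕ) (hn : 3 ≤ n) (A1 A2 : Matrix (Fin n) (Fin n) ℝ)
    (α β γ lam μ c₃ : ℝ)
    (hA1 : A1.IsSymm) (hA2 : A2.IsSymm)
    (htrA1 : A1.trace = 0) (htrA2 : A2.trace = 0)
    (hT12 : (A1 * A2).trace = 0)
    (hEin : ∀ i j : Fin n, (j : ℕ) < 3 →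
      (A1 * A1 + A2 * A2) i j = if i = j then c₃ else 0)
    (h00 : A1 ⟨0, by omega⟩ ⟨0, by omega⟩ = α)
    (h11 : A1 ⟨1, by omega⟩ ⟨1, by omega⟩ = -α)
    (h22 : A1 ⟨2, by omega⟩ ⟨2, by omega⟩ = lam)
    (h01 : A1 ⟨0, by omega⟩ ⟨1, by omega⟩ = 0)
    (h02 : A1 ⟨0, by omega⟩ ⟨2, by omega⟩ = 0)
    (h12 : A1 ⟨1, by omega⟩ ⟨2, by omega⟩ = 0)
    (g00 : A2 ⟨0, by omega⟩ ⟨0, by omega⟩ = β)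
    (g11 : A2 ⟨1, by omega⟩ ⟨1, by omega⟩ = -β)
    (g22 : A2 ⟨2, by omega⟩ ⟨2, by omega⟩ = μ)
    (g01 : A2 ⟨0, by omega⟩ ⟨1, by omega⟩ = γ)
    (g02 : A2 ⟨0, by omega⟩ ⟨2, by omega⟩ = 0)
    (g12 : A2 ⟨1, by omega⟩ ⟨2, by omega⟩ = 0)
    (hinv : ∀ i j : Fin n, (i : ℕ) < 3 → 3 ≤ (j : ℕ) → A1 i j = 0 ∧ A2 i j = 0)
    (hαγ : α * γ ≠ 0)
    (hsum : α ^ 2 + β ^ 2 + γ ^ 2 = lam ^ 2 + μ ^ 2) :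
    ¬ ∃ c₂ : ℝ, ∀ X : Fin n → ℝ, quarticLHS ![A1, A2] X = c₂ * (X ⬝ᵥ X) ^ 2 := by
  rintro ⟨c, hc⟩
  have hα : α ≠ 0 := fun h => hαγ (by rw [h]; ring)
  have hγ : γ ≠ 0 := fun h => hαγ (by rw [h]; ring)
  set i0 : Fin n := ⟨0, by omega⟩ with hi0
  set i1 : Fin n := ⟨1, by omega⟩ with hi1
  set i2 : Fin n := ⟨2, by omega⟩ with hi2
  have d01 : i0 ≠ i1 := by simp [hi0, hi1, Fin.ext_iff]
  have d02 : i0 ≠ i2 := by simp [hi0, hi2, Fin.ext_iff]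
  have d12 : i1 ≠ i2 := by simp [hi1, hi2, Fin.ext_iff]
  have h00' : A1 i0 i0 = α := h00
  have h11' : A1 i1 i1 = -α := h11
  have h22' : A1 i2 i2 = lam := h22
  have h01' : A1 i0 i1 = 0 := h01
  have h02' : A1 i0 i2 = 0 := h02
  have h12' : A1 i1 i2 = 0 := h12
  have g00' : A2 i0 i0 = β := g00
  have g11' : A2 i1 i1 = -β := g11
  have g22' : A2 i2 i2 = μ := g22
  have g01' : A2 i0 i1 = γ := g01
  have g02' : A2 i0 i2 = 0 := g02
  have g12' : A2 i1 i2 = 0 := g12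
  have h10' : A1 i1 i0 = 0 := by rw [hA1.apply, h01']
  have h20' : A1 i2 i0 = 0 := by rw [hA1.apply, h02']
  have h21' : A1 i2 i1 = 0 := by rw [hA1.apply, h12']
  have g10' : A2 i1 i0 = γ := by rw [hA2.apply, g01']
  have g20' : A2 i2 i0 = 0 := by rw [hA2.apply, g02']
  have g21' : A2 i2 i1 = 0 := by rw [hA2.apply, g12']
  have hval : ∀ k : Fin n, k ≠ i0 → k ≠ i1 → k ≠ i2 → 3 ≤ (k : ℕ) := by
    intro k hk0 hk1 hk2
    rcases Nat.lt_or_ge (k : ℕ) 3 with h | h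
    · exfalso
      have : (k : ℕ) = 0 ∨ (k : ℕ) = 1 ∨ (k : ℕ) = 2 := by omega
      rcases this with h' | h' | h'
      · exact hk0 (by apply Fin.ext; simpa [hi0] using h')
      · exact hk1 (by apply Fin.ext; simpa [hi1] using h')
      · exact hk2 (by apply Fin.ext; simpa [hi2] using h')
    · exact h
  have hout1 : ∀ k : Fin n, k ≠ i0 → k ≠ i1 → k ≠ i2 →
      A1 k i0 = 0 ∧ A1 k i1 = 0 ∧ A1 k i2 = 0 := by
    intro k hk0 hk1 hk2
    have hk := hval k hk0 hk1 hk2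
    refine ⟨?_, ?_, ?_⟩ <;> rw [hA1.apply]
    · exact (hinv i0 k (by simp [hi0]) hk).1
    · exact (hinv i1 k (by simp [hi1]) hk).1
    · exact (hinv i2 k (by simp [hi2]) hk).1
  have hout2 : ∀ k : Fin n, k ≠ i0 → k ≠ i1 → k ≠ i2 →
      A2 k i0 = 0 ∧ A2 k i1 = 0 ∧ A2 k i2 = 0 := by
    intro k hk0 hk1 hk2
    have hk := hval k hk0 hk1 hk2
    refine ⟨?_, ?_, ?_⟩ <;> rw [hA2.apply]
    · exact (hinv i0 k (by simp [hi0]) hk).2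
    · exact (hinv i1 k (by simp [hi1]) hk).2
    · exact (hinv i2 k (by simp [hi2]) hk).2
  have hA1V : ∀ p q r : ℝ, A1 *ᵥ V3 i0 i1 i2 p q r =
      V3 i0 i1 i2 (α * p) (-α * q) (lam * r) := by
    intro p q r
    rw [mulVecV3 A1 d01 d02 d12 hout1]
    rw [h00', h01', h02', h10', h11', h12', h20', h21', h22']
    congr 1 <;> ring
  have hA2V : ∀ p q r : ℝ, A2 *ᵥ V3 i0 i1 i2 p q r =
      V3 i0 i1 i2 (β * p + γ * q) (γ * p - β * q) (μ * r) := by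
    intro p q r
    rw [mulVecV3 A2 d01 d02 d12 hout2]
    rw [g00', g01', g02', g10', g11', g12', g20', g21', g22']
    congr 1 <;> ring
  have hdot : ∀ p q r p' q' r' : ℝ,
      V3 i0 i1 i2 p q r ⬝ᵥ V3 i0 i1 i2 p' q' r' = p * p' + q * q' + r * r' :=
    fun p q r p' q' r' => dotV3 d01 d02 d12 p q r p' q' r'
  have hT21 : (A2 * A1).trace = 0 := by rw [Matrix.trace_mul_comm]; exact hT12
  set t1 : ℝ := (A1 * A1).trace with ht1
  set t2 : ℝ := (A2 * A2).trace with ht2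
  have heval : ∀ p q r : ℝ,
      quarticLHS ![A1, A2] (V3 i0 i1 i2 p q r) = c * (p * p + q * q + r * r) ^ 2 := by
    intro p q r
    rw [hc (V3 i0 i1 i2 p q r), hdot]
  -- evaluations at specific points
  have h100 : γ^4 + β^2*t2 - β^4 + α^2*t1 + 2*α^2*γ^2 - 2*α^2*β^2 - α^4 = c := by
    have h := heval 1 0 0
    simp only [quarticLHS, Fin.sum_univ_two, Matrix.cons_val_zero, Matrix.cons_val_one,
      Matrix.head_cons, ← Matrix.mulVec_mulVec, hA1V, hA2V, hdot, hT12, hT21,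
      ← ht1, ← ht2] at h
    linear_combination h
  have h001 : μ^2*t2 - μ^4 + lam^2*t1 - 2*lam^2*μ^2 - lam^4 = c := by
    have h := heval 0 0 1
    simp only [quarticLHS, Fin.sum_univ_two, Matrix.cons_val_zero, Matrix.cons_val_one,
      Matrix.head_cons, ← Matrix.mulVec_mulVec, hA1V, hA2V, hdot, hT12, hT21,
      ← ht1, ← ht2] at h
    linear_combination h
  have h110 : 4*γ^2*t2 - 4*γ^4 + 4*β^4 + 8*α^2*γ^2 + 8*α^2*β^2 + 4*α^4 = 4*c := by
    have h := heval 1 1 0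
    simp only [quarticLHS, Fin.sum_univ_two, Matrix.cons_val_zero, Matrix.cons_val_one,
      Matrix.head_cons, ← Matrix.mulVec_mulVec, hA1V, hA2V, hdot, hT12, hT21,
      ← ht1, ← ht2] at h
    linear_combination h
  have h210 : 16*γ^2*t2 - 7*γ^4 + 24*β*γ*t2 - 48*β*γ^3 + 9*β^2*t2 - 48*β^3*γ + 7*β^4
      + 9*α^2*t1 + 50*α^2*γ^2 - 48*α^2*β*γ + 14*α^2*β^2 + 7*α^4 = 25*c := by
    have h := heval 2 1 0
    simp only [quarticLHS, Fin.sum_univ_two, Matrix.cons_val_zero, Matrix.cons_val_one,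
      Matrix.head_cons, ← Matrix.mulVec_mulVec, hA1V, hA2V, hdot, hT12, hT21,
      ← ht1, ← ht2] at h
    linear_combination h
  have h2m10 : 16*γ^2*t2 - 7*γ^4 - 24*β*γ*t2 + 48*β*γ^3 + 9*β^2*t2 + 48*β^3*γ + 7*β^4
      + 9*α^2*t1 + 50*α^2*γ^2 + 48*α^2*β*γ + 14*α^2*β^2 + 7*α^4 = 25*c := by
    have h := heval 2 (-1) 0
    simp only [quarticLHS, Fin.sum_univ_two, Matrix.cons_val_zero, Matrix.cons_val_one,
      Matrix.head_cons, ← Matrix.mulVec_mulVec, hA1V, hA2V, hdot, hT12, hT21,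
      ← ht1, ← ht2] at h
    linear_combination h
  have h101 : μ^2*t2 - μ^4 + lam^2*t1 - 2*lam^2*μ^2 - lam^4 + 2*γ^2*μ^2 + γ^4
      + 2*β*μ*t2 - 2*β*μ^3 - 2*β*lam^2*μ - 2*β*γ^2*μ + β^2*t2 + 2*β^2*μ^2 - 2*β^3*μ
      - β^4 + 2*α*lam*t1 - 2*α*lam*μ^2 - 2*α*lam^3 + 2*α*γ^2*lam + 4*α*β*lam*μ
      - 2*α*β^2*lam + α^2*t1 + 2*α^2*lam^2 + 2*α^2*γ^2 - 2*α^2*β*μ - 2*α^2*β^2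
      - 2*α^3*lam - α^4 = 4*c := by
    have h := heval 1 0 1
    simp only [quarticLHS, Fin.sum_univ_two, Matrix.cons_val_zero, Matrix.cons_val_one,
      Matrix.head_cons, ← Matrix.mulVec_mulVec, hA1V, hA2V, hdot, hT12, hT21,
      ← ht1, ← ht2] at h
    linear_combination h
  have h011 : μ^2*t2 - μ^4 + lam^2*t1 - 2*lam^2*μ^2 - lam^4 + 2*γ^2*μ^2 + γ^4
      - 2*β*μ*t2 + 2*β*μ^3 + 2*β*lam^2*μ + 2*β*γ^2*μ + β^2*t2 + 2*β^2*μ^2 + 2*β^3*μ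
      - β^4 - 2*α*lam*t1 + 2*α*lam*μ^2 + 2*α*lam^3 - 2*α*γ^2*lam + 4*α*β*lam*μ
      + 2*α*β^2*lam + α^2*t1 + 2*α^2*lam^2 + 2*α^2*γ^2 + 2*α^2*β*μ - 2*α^2*β^2
      + 2*α^3*lam - α^4 = 4*c := by
    have h := heval 0 1 1
    simp only [quarticLHS, Fin.sum_univ_two, Matrix.cons_val_zero, Matrix.cons_val_one,
      Matrix.head_cons, ← Matrix.mulVec_mulVec, hA1V, hA2V, hdot, hT12, hT21,
      ← ht1, ← ht2] at h
    linear_combination h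
  have h111 : μ^2*t2 - μ^4 + lam^2*t1 - 2*lam^2*μ^2 - lam^4 + 4*γ*μ*t2 - 4*γ*μ^3
      - 4*γ*lam^2*μ + 4*γ^2*t2 + 4*γ^2*μ^2 - 4*γ^3*μ - 4*γ^4 + 4*β^2*μ^2 - 4*β^2*γ*μ
      + 4*β^4 + 8*α*β*lam*μ - 8*α*β*γ*lam + 4*α^2*lam^2 + 4*α^2*γ*μ + 8*α^2*γ^2
      + 8*α^2*β^2 + 4*α^4 = 9*c := by
    have h := heval 1 1 1
    simp only [quarticLHS, Fin.sum_univ_two, Matrix.cons_val_zero, Matrix.cons_val_one,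
      Matrix.head_cons, ← Matrix.mulVec_mulVec, hA1V, hA2V, hdot, hT12, hT21,
      ← ht1, ← ht2] at h
    linear_combination h
  have hm111 : μ^2*t2 - μ^4 + lam^2*t1 - 2*lam^2*μ^2 - lam^4 - 4*γ*μ*t2 + 4*γ*μ^3
      + 4*γ*lam^2*μ + 4*γ^2*t2 + 4*γ^2*μ^2 + 4*γ^3*μ - 4*γ^4 + 4*β^2*μ^2 + 4*β^2*γ*μ
      + 4*β^4 + 8*α*β*lam*μ + 8*α*β*γ*lam + 4*α^2*lam^2 - 4*α^2*γ*μ + 8*α^2*γ^2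
      + 8*α^2*β^2 + 4*α^4 = 9*c := by
    have h := heval (-1) 1 1
    simp only [quarticLHS, Fin.sum_univ_two, Matrix.cons_val_zero, Matrix.cons_val_one,
      Matrix.head_cons, ← Matrix.mulVec_mulVec, hA1V, hA2V, hdot, hT12, hT21,
      ← ht1, ← ht2] at h
    linear_combination h
  -- coefficient equations
  have eqA : β*γ*t2 - 2*β*γ^3 - 2*β^3*γ - 2*α^2*β*γ = 0 := by
    linear_combination (h210 - h2m10)/48
  have eqB : γ*μ*t2 - γ*μ^3 - γ*lam^2*μ - γ^3*μ - β^2*γ*μ - 2*α*β*γ*lam + α^2*γ*μ = 0 := by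
    linear_combination (h111 - hm111)/8
  have eqF : β*μ*t2 - β*μ^3 - β*lam^2*μ - β*γ^2*μ - β^3*μ + α*lam*t1 - α*lam*μ^2
      - α*lam^3 + α*γ^2*lam - α*β^2*lam - α^2*β*μ - α^3*lam = 0 := by
    linear_combination (h101 - h011)/4
  have eqH : γ^2*μ^2 + β^2*μ^2 + 2*α*β*lam*μ + α^2*lam^2 = c := by
    linear_combination (h101 + h011)/4 - h100/2 - h001/2
  have eqE : γ^2*t2 - γ^4 + β^4 + 2*α^2*γ^2 + 2*α^2*β^2 + α^4 = c := by
    linear_combination h110/4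
  -- case analysis
  by_cases hb : β = 0
  · subst hb
    have hB2 : μ * (t2 - 2*γ^2) = 0 := by
      have hz : γ * (μ * (t2 - 2*γ^2)) = 0 := by linear_combination eqB - γ*μ*hsum
      exact (mul_eq_zero.mp hz).resolve_left hγ
    have hF2 : lam * (t1 - 2*α^2) = 0 := by
      have hz : α * (lam * (t1 - 2*α^2)) = 0 := by linear_combination eqF - α*lam*hsum
      exact (mul_eq_zero.mp hz).resolve_left hα
    by_cases hm : μ = 0
    · subst hm
      have hlam : lam ≠ 0 := by
        intro h
        apply hα
        have hl2 : lam^2 = 0 := by rw [h]; ring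
        have h2 : α^2 = 0 := by linarith only [sq_nonneg γ, sq_nonneg α, hl2, hsum]
        exact pow_eq_zero_iff two_ne_zero |>.mp h2
      have ht1v : t1 = 2*α^2 := by
        rcases mul_eq_zero.mp hF2 with h | h
        · exact absurd h hlam
        · linarith only [h]
      have hfin : γ^2*(α^2+γ^2) = 0 := by
        linear_combination h100 - α^2*ht1v - eqH - α^2*hsum
      rcases mul_eq_zero.mp hfin with h | h
      · exact hγ (pow_eq_zero_iff two_ne_zero |>.mp h)
      · apply hα
        have h2 : α^2 = 0 := by linarith only [h, sq_nonneg γ, sq_nonneg α]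
        exact pow_eq_zero_iff two_ne_zero |>.mp h2
    · have ht2v : t2 = 2*γ^2 := by
        rcases mul_eq_zero.mp hB2 with h | h
        · exact absurd h hm
        · linarith only [h]
      have hcv : c = (α^2+γ^2)^2 := by linear_combination -eqE + γ^2*ht2v
      have hfin : α^2*μ^2 + γ^2*lam^2 = 0 := by
        linear_combination -eqH - hcv - (α^2+γ^2)*hsum
      have ha2 : 0 < α^2 := lt_of_le_of_ne (sq_nonneg α) (Ne.symm (pow_ne_zero 2 hα))
      have hm2 : 0 < μ^2 := lt_of_le_of_ne (sq_nonneg μ) (Ne.symm (pow_ne_zero 2 hm))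
      have hgl : 0 ≤ γ^2*lam^2 := mul_nonneg (sq_nonneg γ) (sq_nonneg lam)
      linarith only [hfin, hgl, mul_pos ha2 hm2]
  · have ht2S : t2 = 2*(α^2+β^2+γ^2) := by
      have hz : β*(γ*(t2 - 2*(α^2+β^2+γ^2))) = 0 := by linear_combination eqA
      rcases mul_eq_zero.mp hz with h | h
      · exact absurd h hb
      · rcases mul_eq_zero.mp h with h' | h'
        · exact absurd h' hγ
        · linarith only [h']
    have hml : α*μ - β*lam = 0 := by
      have hz : γ*(2*α*(α*μ - β*lam)) = 0 := by
        linear_combination eqB - γ*μ*ht2S - γ*μ*hsum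
      rcases mul_eq_zero.mp hz with h | h
      · exact absurd h hγ
      · rcases mul_eq_zero.mp h with h' | h'
        · exact absurd (by linarith only [h'] : α = 0) hα
        · exact h'
    by_cases hl : lam = 0
    · subst hl
      have hmz : μ = 0 := by
        have h : α*μ = 0 := by linear_combination hml
        rcases mul_eq_zero.mp h with h' | h'
        · exact absurd h' hα
        · exact h'
      subst hmz
      have ha2 : 0 < α^2 := lt_of_le_of_ne (sq_nonneg α) (Ne.symm (pow_ne_zero 2 hα))
      have h0 : α^2+β^2+γ^2 = 0 := by linear_combination hsum
      linarith only [h0, sq_nonneg β, sq_nonneg γ, ha2]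
    · have ht1v2 : t1 = 2*α^2 + 2*β^2 := by
        have hz : α*(lam*(t1 - (2*α^2+2*β^2))) = 0 := by
          linear_combination eqF - β*μ*ht2S - (α*lam+β*μ)*hsum
        rcases mul_eq_zero.mp hz with h | h
        · exact absurd h hα
        · rcases mul_eq_zero.mp h with h' | h'
          · exact absurd h' hl
          · linarith only [h']
      have hcv2 : c = (α^2+β^2+γ^2)^2 := by
        linear_combination -h100 + α^2*ht1v2 + β^2*ht2S
      have hfin : 2*(γ^2*lam^2) = 0 := by
        linear_combination -h001 + lam^2*ht1v2 + μ^2*ht2S - hcv2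
          - (α^2+β^2+γ^2-lam^2-μ^2)*hsum
      have h2 : γ^2*lam^2 = 0 := by linarith only [hfin]
      rcases mul_eq_zero.mp h2 with h | h
      · exact hγ (pow_eq_zero_iff two_ne_zero |>.mp h)
      · exact hl (pow_eq_zero_iff two_ne_zero |>.mp h)
end
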